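/- For every integer n ≥ 1 and every permutation σ of {0,…,n}, one has the equality of linear maps R^n → R^{n+1}: sd_n^σ ∘ ∂_n = ∂_{σ(n)} ∘ sd_{n−1}^τ, where τ is the unique permutation of {0,…,n−1} satisfying ∂_{σ(n)}(τ(j)) = σ(j) for all 0 ≤ j ≤ n−1, and sd_{n−1}^τ is the subdivision map in dimension n−1 formed with respect to the same family of centers (c^s)_{0 ≤ s ≤ n−1}. -/
import Mathlib


/-!  Subdivision of simplices, modeled linearly.

The algebraic `n`-simplex over a commutative ring `R` is modeled by the hyperplane
`{t ∈ R^{n+1} : ∑ t_j = 1}` inside the free module `R^{n+1} = (Fin (n+1) → R)`; its vertices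
are the standard basis vectors, and affine-linear maps of simplices are extended to the linear
maps of the ambient free modules determined by the images of the vertices. -/

/-- The linear map `R^a → M` sending the `j`-th standard basis vector to `v j`. -/
noncomputable def ofVecs {R : Type*} [CommRing R] {a : ℕ} {M : Type*} [AddCommGroup M]
    [Module R M] (v : Fin a → M) : (Fin a → R) →ₗ[R] M where
  toFun t := ∑ j, t j • v j
  map_add' t s := by simp [add_smul, Finset.sum_add_distrib]
  map_smul' r t := by simp [smul_smul, Finset.smul_sum]

/-- The face map `∂_i : R^a → R^{a+1}`, sending `e_j` to `e_j` for `j < i` and to `e_{j+1}`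
for `j ≥ i`. -/
noncomputable def face (R : Type*) [CommRing R] (a : ℕ) (i : Fin (a + 1)) :
    (Fin a → R) →ₗ[R] (Fin (a + 1) → R) :=
  ofVecs fun j => Pi.single (i.succAbove j) 1

/-- Given centers `c^s ∈ R^{s+1}` and a nonempty subset `S ⊆ {0,…,n}` with `s+1` elements,
`cS c S = i_S (c^s) ∈ R^{n+1}` is the image of `c^s` under the linear map `i_S` sending `e_j`
to `e_{σ_S j}`, where `σ_S : {0,…,s} → S` is the order-preserving bijection.  (For `S = ∅` it
is `0`; this value is never used.) -/
noncomputable def cS {R : Type*} [CommRing R] (c : (s : ℕ) → Fin (s + 1) → R) {n : ℕ}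
    (S : Finset (Fin (n + 1))) : Fin (n + 1) → R := fun l =>
  if h : l ∈ S then
    c (S.card - 1) ⟨((S.orderIsoOfFin rfl).symm ⟨l, h⟩ : Fin S.card), by
      have h1 : 0 < S.card := Finset.card_pos.mpr ⟨l, h⟩
      have h2 := ((S.orderIsoOfFin rfl).symm ⟨l, h⟩).isLt
      omega⟩
  else 0

/-- The subdivision map `sd_n^σ : R^{n+1} → R^{n+1}`, the linear map sending the vertex `e_k`
to `c^n_{σ({0,…,k})}` for `0 ≤ k ≤ n`. -/
noncomputable def sd (R : Type*) [CommRing R] (c : (s : ℕ) → Fin (s + 1) → R) (n : ℕ)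
    (σ : Equiv.Perm (Fin (n + 1))) : (Fin (n + 1) → R) →ₗ[R] (Fin (n + 1) → R) :=
  ofVecs fun j => cS c ((Finset.Iic j).image σ)

/-- The homotopy map `sd_{n,k}^σ : R^{n+2} → R^{n+1} × R^2` (for `0 ≤ k ≤ n` and a
permutation `σ` of `{0,…,k}`, acting on the subset `{0,…,k}` of `{0,…,n}`): the linear map
sending `e_j` to `(c^n_{σ({0,…,j})}, e_0)` for `0 ≤ j ≤ k` and `e_j` to `(e_{j-1}, e_1)` for
`k+1 ≤ j ≤ n+1`. -/
noncomputable def hsd (R : Type*) [CommRing R] (c : (s : ℕ) → Fin (s + 1) → R) (n k : ℕ)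
    (hk : k ≤ n) (σ : Equiv.Perm (Fin (k + 1))) :
    (Fin (n + 2) → R) →ₗ[R] (Fin (n + 1) → R) × (Fin 2 → R) :=
  ofVecs fun j =>
    if h : (j : ℕ) ≤ k then
      (cS c ((Finset.Iic (⟨(j : ℕ), by omega⟩ : Fin (k + 1))).image
          fun a => Fin.castLE (by omega : k + 1 ≤ n + 1) (σ a)), Pi.single 0 1)
    else
      (Pi.single (⟨(j : ℕ) - 1, by have := j.isLt; omega⟩ : Fin (n + 1)) 1, Pi.single 1 1)


section Aux

variable {R : Type*} [CommRing R]

lemma ofVecs_single {a : ℕ} {M : Type*} [AddCommGroup M] [Module R M]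
    (v : Fin a → M) (j : Fin a) : ofVecs v (Pi.single j (1 : R)) = v j := by
  simp [ofVecs, Pi.single_apply]

omit [CommRing R] in
lemma c_congr (c : (s : ℕ) → Fin (s + 1) → R) {a b : ℕ} (hab : a = b)
    {i : Fin (a + 1)} {j : Fin (b + 1)} (hij : (i : ℕ) = (j : ℕ)) : c a i = c b j := by
  subst hab; congr 1; exact Fin.ext hij

lemma cS_image (c : (s : ℕ) → Fin (s + 1) → R) {a b : ℕ}
    {f : Fin (a + 1) → Fin (b + 1)} (hf : StrictMono f)
    (S : Finset (Fin (a + 1))) (l : Fin (a + 1)) :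
    cS c (S.image f) (f l) = cS c S l := by
  have hcard : (S.image f).card = S.card := Finset.card_image_of_injective S hf.injective
  by_cases hl : l ∈ S
  · have hfl : f l ∈ S.image f := Finset.mem_image_of_mem f hl
    rw [cS, cS, dif_pos hfl, dif_pos hl]
    refine c_congr c (by omega) ?_
    -- indices agree
    set k := (S.orderIsoOfFin rfl).symm ⟨l, hl⟩ with hk
    set k' := ((S.image f).orderIsoOfFin rfl).symm ⟨f l, hfl⟩ with hk'
    have h1 : S.orderEmbOfFin rfl k = l := by
      have := (S.orderIsoOfFin rfl).apply_symm_apply ⟨l, hl⟩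
      exact congrArg Subtype.val this
    have h2 : (S.image f).orderEmbOfFin rfl k' = f l := by
      have := ((S.image f).orderIsoOfFin rfl).apply_symm_apply ⟨f l, hfl⟩
      exact congrArg Subtype.val this
    have hg : (fun i => f (S.orderEmbOfFin rfl i)) = (S.image f).orderEmbOfFin hcard :=
      Finset.orderEmbOfFin_unique hcard
        (fun x => Finset.mem_image_of_mem f (Finset.orderEmbOfFin_mem S rfl x))
        (hf.comp (S.orderEmbOfFin rfl).strictMono)
    have h3 : (S.image f).orderEmbOfFin hcard k = f l := by
      rw [← hg]; exact congrArg f h1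
    have h5 : (S.image f).orderEmbOfFin rfl k' = (S.image f).orderEmbOfFin hcard k := by
      rw [h2, h3]
    have h4 : (k' : ℕ) = (k : ℕ) := Finset.orderEmbOfFin_eq_orderEmbOfFin_iff.mp h5
    exact h4
  · have hfl : f l ∉ S.image f := by
      simp only [Finset.mem_image, not_exists, not_and]
      intro x hx hfx
      exact absurd (hf.injective hfx ▸ hx) hl
    rw [cS, cS, dif_neg hfl, dif_neg hl]

lemma face_cS (c : (s : ℕ) → Fin (s + 1) → R) {a : ℕ} (i : Fin (a + 2))
    (S : Finset (Fin (a + 1))) :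
    face R (a + 1) i (cS c S) = cS c (S.image i.succAbove) := by
  funext m
  have happ : face R (a + 1) i (cS c S) m
      = ∑ l, cS c S l * (Pi.single (i.succAbove l) (1 : R) : Fin (a + 2) → R) m := by
    simp [face, ofVecs, Finset.sum_apply]
  rcases eq_or_ne m i with heq | hm
  · subst heq
    have h0 : ∀ l : Fin (a + 1), cS c S l * (Pi.single (m.succAbove l) (1 : R) : Fin (a + 2) → R) m = 0 := by
      intro l
      rw [Pi.single_apply, if_neg (Ne.symm (m.succAbove_ne l)), mul_zero]
    have hni : m ∉ S.image m.succAbove := by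
      simp only [Finset.mem_image, not_exists, not_and]
      exact fun x _ => m.succAbove_ne x
    rw [happ, Finset.sum_eq_zero (fun l _ => h0 l), cS, dif_neg hni]
  · obtain ⟨l₀, rfl⟩ := Fin.exists_succAbove_eq hm
    rw [happ, Finset.sum_eq_single l₀]
    · rw [Pi.single_apply, if_pos rfl, mul_one]
      exact (cS_image c (Fin.strictMono_succAbove i) S l₀).symm
    · intro l _ hl
      rw [Pi.single_apply, if_neg, mul_zero]
      exact fun h => hl (i.succAbove_right_injective h.symm)
    · intro h; exact absurd (Finset.mem_univ l₀) h

lemma Iic_castSucc_eq_image {n : ℕ} (j : Fin (n + 1)) :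
    Finset.Iic j.castSucc = (Finset.Iic j).image Fin.castSucc := by
  ext k
  simp only [Finset.mem_Iic, Finset.mem_image]
  constructor
  · intro hk
    refine ⟨⟨(k : ℕ), ?_⟩, ?_, ?_⟩
    · have := j.isLt
      have hk' : (k : ℕ) ≤ (j : ℕ) := hk
      omega
    · exact hk
    · rfl
  · rintro ⟨x, hx, rfl⟩
    exact hx

end Aux

/-- **Statement 7.** For every `n ≥ 1` (here written as `n+1`) and every permutation `σ` of
`{0,…,n+1}`, one has `sd_{n+1}^σ ∘ ∂_{n+1} = ∂_{σ(n+1)} ∘ sd_n^τ` as linear maps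
`R^{n+1} → R^{n+2}`, where `τ` is the unique permutation of `{0,…,n}` satisfying
`∂_{σ(n+1)}(τ(j)) = σ(j)` for all `0 ≤ j ≤ n` (the order embedding `∂_{σ(n+1)}` omitting
`σ(n+1)` being `Fin.succAbove`), and `sd_n^τ` is formed from the same family of centers. -/
theorem stmt7 (R : Type*) [CommRing R] (n : ℕ) (c : (s : ℕ) → Fin (s + 1) → R)
    (hc : ∀ s, s ≤ n + 1 → ∑ j, c s j = 1)
    (σ : Equiv.Perm (Fin (n + 2))) (τ : Equiv.Perm (Fin (n + 1)))
    (hτ : ∀ j : Fin (n + 1), (σ (Fin.last (n + 1))).succAbove (τ j) = σ j.castSucc) :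
    (sd R c (n + 1) σ).comp (face R (n + 1) (Fin.last (n + 1))) =
      (face R (n + 1) (σ (Fin.last (n + 1)))).comp (sd R c n τ) := by
  apply Module.Basis.ext (Pi.basisFun R (Fin (n + 1)))
  intro j
  have hb : (Pi.basisFun R (Fin (n + 1))) j = Pi.single j (1 : R) := by
    simp [Pi.basisFun_apply]
  simp only [LinearMap.comp_apply, hb]
  rw [show face R (n + 1) (Fin.last (n + 1)) (Pi.single j 1)
        = Pi.single ((Fin.last (n + 1)).succAbove j) (1 : R) from ofVecs_single _ j]
  rw [show sd R c n τ (Pi.single j 1) = cS c ((Finset.Iic j).image τ) from ofVecs_single _ j]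
  rw [show (Fin.last (n + 1)).succAbove j = j.castSucc from congrFun Fin.succAbove_last j]
  rw [show sd R c (n + 1) σ (Pi.single j.castSucc 1)
        = cS c ((Finset.Iic j.castSucc).image σ) from ofVecs_single _ j.castSucc]
  rw [face_cS, Finset.image_image, Iic_castSucc_eq_image, Finset.image_image]
  have himg : Finset.image (⇑σ ∘ Fin.castSucc) (Finset.Iic j)
      = Finset.image ((σ (Fin.last (n + 1))).succAbove ∘ ⇑τ) (Finset.Iic j) :=
    Finset.image_congr (fun x _ => (hτ x).symm)
  rw [himg]
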